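/- arXiv:math/9812085 — 2 statements merged into one kernel-verified Lean document; each statement's English description precedes it below -/
import Mathlib

section
/- With the notation of the model, for all η ∈ V and n ∈ ℕ one has [F, c∘d] η_n = −λ q^{3n+1} (wTη)_n − λ q^{n+1} λ_{n+1} λ_{n+2} (wSη)_{n+2}, where [F, X] := F∘X − X∘F. -/
/-- `lam q n = λ_n = (1 - q^(2n))^(1/2)`, so `lam q 0 = 0`. -/
noncomputable def lam (q : ℝ) (n : ℕ) : ℝ := Real.sqrt (1 - q ^ (2 * n))

/-!
`c ∘ d` maps `η_n` to `q^{n+1} λ_{n+1} (wη)_{n+1}`, so both `F ∘ (c ∘ d)` and `(c ∘ d) ∘ F` send `η_n`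
to combinations of `(wTη)_n`, `(w Rₙ η)_{n+1}` and `(wSη)_{n+2}`, where `Rₙ = wⁿ R w⁻ⁿ`.
Commuting `T` and `S` past `w` costs a factor `q⁻¹`, and the `R`-terms cancel because
`R_{n+1} w = w Rₙ`. The remaining coefficients are `q^{n+1}λ_{n+1}² q⁻¹ - qⁿλ_n²`, which is
`q^{3n}(1 - q²)` by `λ_m² = 1 - q^{2m}`, and `q^{n+1}λ_{n+1}λ_{n+2}(q⁻¹ - q)`.
-/

open Finsupp

lemma lam_mul_self {q : ℝ} (hq : |q| ≤ 1) (m : ℕ) : lam q m * lam q m = 1 - q ^ (2 * m) := by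
  refine Real.mul_self_sqrt (sub_nonneg.mpr ?_)
  rw [← (even_two_mul m).pow_abs]
  exact pow_le_one₀ (abs_nonneg q) hq

@[simp]
lemma lam_zero (q : ℝ) : lam q 0 = 0 := by
  simp [lam]

lemma LinearMap.apply_linearEquiv_of_conj_eq_smul {K V : Type*} [Field K] [AddCommGroup V]
    [Module K V] {w : V ≃ₗ[K] V} {T : V →ₗ[K] V} {q : K}
    (hq : q ≠ 0) (hT : ∀ η, w (T (w.symm η)) = q • T η) (η : V) :
    T (w η) = q⁻¹ • w (T η) := by
  conv_lhs => rw [← inv_smul_smul₀ hq (T (w η)), ← hT, LinearEquiv.symm_apply_apply]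

lemma LinearEquiv.conj_pow_succ_apply {R M : Type*} [Semiring R] [AddCommMonoid M] [Module R M]
    (w : M ≃ₗ[R] M) (f : M →ₗ[R] M) (n : ℕ) (η : M) :
    (w ^ (n + 1)) (f ((w.symm ^ (n + 1)) (w η))) = w ((w ^ n) (f ((w.symm ^ n) η))) := by
  simp only [LinearEquiv.pow_apply]
  rw [Function.iterate_succ_apply' (⇑w), Function.iterate_succ_apply (⇑w.symm),
    LinearEquiv.symm_apply_apply]

section

variable (q : ℝ) {V : Type*} [AddCommGroup V] [Module ℂ V] (w : V ≃ₗ[ℂ] V)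
  {c d : (ℕ →₀ V) →ₗ[ℂ] (ℕ →₀ V)}
  (hc : ∀ (η : V) (n : ℕ), c (single n η) = ((q ^ n : ℝ) : ℂ) • single n (w η))
  (hd : ∀ (η : V) (n : ℕ), d (single n η) = (lam q (n + 1) : ℂ) • single (n + 1) η)
include hc hd

lemma cd_single (m : ℕ) (η : V) :
    (c ∘ₗ d) (single m η) = ((q ^ (m + 1) * lam q (m + 1) : ℝ) : ℂ) • single (m + 1) (w η) := by
  rw [LinearMap.comp_apply, hd, map_smul, hc, smul_smul]
  push_cast
  ring_nf

lemma lam_smul_cd_single_pred (n : ℕ) (η : V) :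
    (lam q n : ℂ) • (c ∘ₗ d) (single (n - 1) η)
      = ((q ^ n * lam q n * lam q n : ℝ) : ℂ) • single n (w η) := by
  cases n with
  | zero => simp -- `0 - 1` truncates to `0`; the term is killed by `λ₀ = 0`
  | succ m =>
    rw [Nat.add_sub_cancel, cd_single q w hc hd, smul_smul]
    push_cast
    ring_nf

end

theorem commutator_F_cd_general
    (q : ℝ) (hq0 : 0 < q) (hq1 : q < 1)
    (V : Type*) [AddCommGroup V] [Module ℂ V]
    (w : V ≃ₗ[ℂ] V) (T S R : V →ₗ[ℂ] V)
    (hT : ∀ η : V, w (T (w.symm η)) = (q : ℂ) • T η)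
    (hS : ∀ η : V, w (S (w.symm η)) = (q : ℂ) • S η)
    (c d F : (ℕ →₀ V) →ₗ[ℂ] (ℕ →₀ V))
    (hc : ∀ (η : V) (n : ℕ),
      c (Finsupp.single n η) = ((q ^ n : ℝ) : ℂ) • Finsupp.single n (w η))
    (hd : ∀ (η : V) (n : ℕ),
      d (Finsupp.single n η) = (lam q (n + 1) : ℂ) • Finsupp.single (n + 1) η)
    (hF : ∀ (η : V) (n : ℕ),
      F (Finsupp.single n η) = (lam q n : ℂ) • Finsupp.single (n - 1) (T η)
        + Finsupp.single n ((w ^ n) (R ((w.symm ^ n) η)))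
        + (lam q (n + 1) : ℂ) • Finsupp.single (n + 1) (S η))
    :
    ∀ (η : V) (n : ℕ),
      (F ∘ₗ (c ∘ₗ d) - (c ∘ₗ d) ∘ₗ F) (Finsupp.single n η)
        = -(((q - q⁻¹) * q ^ (3 * n + 1) : ℝ) : ℂ) • Finsupp.single n (w (T η))
          - (((q - q⁻¹) * q ^ (n + 1) * lam q (n + 1) * lam q (n + 2) : ℝ) : ℂ) •
              Finsupp.single (n + 2) (w (S η)) := by
  intro η n
  have hqC : (q : ℂ) ≠ 0 := by exact_mod_cast hq0.ne'
  have hlam : ∀ m, lam q m * lam q m = 1 - q ^ (2 * m) :=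
    lam_mul_self (abs_le.mpr ⟨by linarith, hq1.le⟩)
  rw [LinearMap.sub_apply, LinearMap.comp_apply F, LinearMap.comp_apply (c ∘ₗ d)]
  rw [cd_single q w hc hd, map_smul, hF, Nat.add_sub_cancel,
    LinearMap.apply_linearEquiv_of_conj_eq_smul hqC hT,
    LinearMap.apply_linearEquiv_of_conj_eq_smul hqC hS, LinearEquiv.conj_pow_succ_apply]
  rw [hF, map_add, map_add, map_smul, map_smul, lam_smul_cd_single_pred q w hc hd,
    cd_single q w hc hd, cd_single q w hc hd, ← smul_single, ← smul_single]
  match_scalars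
  · norm_cast
    field_simp
    linear_combination q ^ (n + 1) * hlam (n + 1) - q ^ (n + 1) * hlam n
  · ring
  · field_simp
    ring

/-- Section 6 of the paper: the commutator `[F, π(x₋)]` for `x₋ = cd`, a generator of the Podles sphere algebra `𝒪(S²_q)`. -/
theorem commutator_F_cd
    (q : ℝ) (hq0 : 0 < q) (hq1 : q < 1)
    (V : Type*) [AddCommGroup V] [Module ℂ V]
    (w : V ≃ₗ[ℂ] V) (T S R : V →ₗ[ℂ] V)
    (hT : ∀ η : V, w (T (w.symm η)) = (q : ℂ) • T η)
    (hS : ∀ η : V, w (S (w.symm η)) = (q : ℂ) • S η)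
    (hR : ∀ η : V, w (w (R (w.symm (w.symm η)))) + ((q ^ 2 : ℝ) : ℂ) • R η
            = ((1 + q ^ 2 : ℝ) : ℂ) • w (R (w.symm η)))
    (a b c d F : (ℕ →₀ V) →ₗ[ℂ] (ℕ →₀ V))
    (ha : ∀ (η : V) (n : ℕ),
      a (Finsupp.single n η) = (lam q n : ℂ) • Finsupp.single (n - 1) η)
    (hb : ∀ (η : V) (n : ℕ),
      b (Finsupp.single n η) = -(((q ^ (n + 1) : ℝ)) : ℂ) • Finsupp.single n (w.symm η))
    (hc : ∀ (η : V) (n : ℕ),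
      c (Finsupp.single n η) = ((q ^ n : ℝ) : ℂ) • Finsupp.single n (w η))
    (hd : ∀ (η : V) (n : ℕ),
      d (Finsupp.single n η) = (lam q (n + 1) : ℂ) • Finsupp.single (n + 1) η)
    (hF : ∀ (η : V) (n : ℕ),
      F (Finsupp.single n η) = (lam q n : ℂ) • Finsupp.single (n - 1) (T η)
        + Finsupp.single n ((w ^ n) (R ((w.symm ^ n) η)))
        + (lam q (n + 1) : ℂ) • Finsupp.single (n + 1) (S η))
    :
    ∀ (η : V) (n : ℕ),
      (F ∘ₗ (c ∘ₗ d) - (c ∘ₗ d) ∘ₗ F) (Finsupp.single n η)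
        = -(((q - q⁻¹) * q ^ (3 * n + 1) : ℝ) : ℂ) • Finsupp.single n (w (T η))
          - (((q - q⁻¹) * q ^ (n + 1) * lam q (n + 1) * lam q (n + 2) : ℝ) : ℂ) •
              Finsupp.single (n + 2) (w (S η)) :=
  commutator_F_cd_general q hq0 hq1 V w T S R hT hS c d F hc hd hF
end

section
/- Suppose that for every n ≥ 1 the linear maps T_n satisfy λ_{n+1} λ_n w²∘T_{n−1} + q⁴ λ_n λ_{n−1} T_{n+1}∘w² = (q+q³) λ_{n+1} λ_{n−1} w∘T_n∘w, and λ_{n−1} w²∘T_{n−1} + λ_{n+1} T_{n+1}∘w² = (q+q⁻¹) λ_n w∘T_n∘w. Then q λ_n T_{n+1} = λ_{n+1} w∘T_n∘w⁻¹ for every n ≥ 1. -/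
theorem lam_sq {q : ℝ} (hq : |q| ≤ 1) (n : ℕ) : lam q n ^ 2 = 1 - q ^ (2 * n) := by
  refine Real.sq_sqrt (sub_nonneg.mpr ?_)
  rw [pow_mul]
  exact pow_le_one₀ (sq_nonneg q) (sq_le_one_iff_abs_le_one q |>.mpr hq)

theorem lam_add_sq_sub {q : ℝ} (hq : |q| ≤ 1) (m k : ℕ) :
    lam q (m + k) ^ 2 - q ^ (2 * k) * lam q m ^ 2 = 1 - q ^ (2 * k) := by
  rw [lam_sq hq, lam_sq hq, mul_add, pow_add]
  ring

theorem smul_eq_smul_of_three_term_relations {K M : Type*} [Field K] [AddCommGroup M] [Module K M]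
    {a b c q : K} (hq : q ≠ 0) (hq4 : 1 - q ^ 4 ≠ 0)
    (hb : b ^ 2 - q ^ 2 * a ^ 2 = 1 - q ^ 2) (hc : c ^ 2 - q ^ 4 * a ^ 2 = 1 - q ^ 4)
    {A B C : M}
    (e1 : (c * b) • A + (q ^ 4 * b * a) • B = ((q + q ^ 3) * c * a) • C)
    (e2 : a • A + c • B = ((q + q⁻¹) * b) • C) :
    (q * b) • B = c • C := by
  have elim : (1 - q ^ 4) • ((q * b) • B - c • C) =
      (q * c * b) • (a • A + c • B - ((q + q⁻¹) * b) • C)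
        - (q * a) • ((c * b) • A + (q ^ 4 * b * a) • B - ((q + q ^ 3) * c * a) • C) := by
    match_scalars
    · linear_combination (-(q * b)) * hc
    · field_simp
      linear_combination (q ^ 2 + 1) * c * hb
    · ring
  rw [sub_eq_zero.mpr e1, sub_eq_zero.mpr e2, smul_zero, smul_zero, sub_zero,
    smul_eq_zero_iff_right hq4] at elim
  exact sub_eq_zero.mp elim

theorem smul_eq_smul_comp_symm_of_comp_comp {R M : Type*} [CommSemiring R] [AddCommMonoid M]
    [Module R M] (w : M ≃ₗ[R] M) {S T : M →ₗ[R] M} {x y : R}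
    (h : x • (S ∘ₗ w.toLinearMap ∘ₗ w.toLinearMap) = y • (w.toLinearMap ∘ₗ T ∘ₗ w.toLinearMap)) :
    x • S = y • (w.toLinearMap ∘ₗ T ∘ₗ w.symm.toLinearMap) := by
  rw [← w.eq_comp_toLinearMap_iff, ← w.eq_comp_toLinearMap_iff]
  simpa [LinearMap.smul_comp, LinearMap.comp_assoc] using h

/-- Relations (l5-12) and (l5-15) from the proofs of Theorems 1 and 2 of the paper
imply relation (l5-16): `q λ_n T_{n+1} = λ_{n+1} w ∘ T_n ∘ w⁻¹`. -/
theorem rel_l5_16 (q : ℝ) (hq0 : 0 < q) (hq1 : q < 1)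
    (V : Type*) [AddCommGroup V] [Module ℂ V]
    (w : V ≃ₗ[ℂ] V) (T : ℕ → (V →ₗ[ℂ] V))
    (h1 : ∀ n : ℕ, 1 ≤ n →
      ((lam q (n + 1) * lam q n : ℝ) : ℂ) •
          (w.toLinearMap ∘ₗ w.toLinearMap ∘ₗ T (n - 1))
        + ((q ^ 4 * lam q n * lam q (n - 1) : ℝ) : ℂ) •
            (T (n + 1) ∘ₗ w.toLinearMap ∘ₗ w.toLinearMap)
        = (((q + q ^ 3) * lam q (n + 1) * lam q (n - 1) : ℝ) : ℂ) •
            (w.toLinearMap ∘ₗ T n ∘ₗ w.toLinearMap))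
    (h2 : ∀ n : ℕ, 1 ≤ n →
      ((lam q (n - 1) : ℝ) : ℂ) • (w.toLinearMap ∘ₗ w.toLinearMap ∘ₗ T (n - 1))
        + ((lam q (n + 1) : ℝ) : ℂ) • (T (n + 1) ∘ₗ w.toLinearMap ∘ₗ w.toLinearMap)
        = (((q + q⁻¹) * lam q n : ℝ) : ℂ) • (w.toLinearMap ∘ₗ T n ∘ₗ w.toLinearMap)) :
    ∀ n : ℕ, 1 ≤ n →
      ((q * lam q n : ℝ) : ℂ) • T (n + 1)
        = ((lam q (n + 1) : ℝ) : ℂ) • (w.toLinearMap ∘ₗ T n ∘ₗ w.symm.toLinearMap) := by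
  intro n hn
  obtain ⟨m, rfl⟩ : ∃ m, n = m + 1 := ⟨n - 1, by omega⟩
  have hq : |q| ≤ 1 := abs_le.mpr ⟨by linarith, hq1.le⟩
  have hb : lam q (m + 1) ^ 2 - q ^ 2 * lam q m ^ 2 = 1 - q ^ 2 := lam_add_sq_sub hq m 1
  have hc : lam q (m + 1 + 1) ^ 2 - q ^ 4 * lam q m ^ 2 = 1 - q ^ 4 := lam_add_sq_sub hq m 2
  have hq4 : (1 : ℝ) - q ^ 4 ≠ 0 := (sub_pos.mpr (pow_lt_one₀ hq0.le hq1 (by norm_num))).ne'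
  have e1 := h1 (m + 1) hn
  have e2 := h2 (m + 1) hn
  simp only [Nat.add_sub_cancel] at e1 e2
  push_cast at e1 e2 ⊢
  refine smul_eq_smul_comp_symm_of_comp_comp w ?_
  exact smul_eq_smul_of_three_term_relations (by exact_mod_cast hq0.ne') (by exact_mod_cast hq4)
    (by exact_mod_cast hb) (by exact_mod_cast hc) e1 e2
end
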